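/- Let G be a connected simple graph with rad(G) = diam(G) = 2, and let G + u denote the join of G with a single new vertex u (u is adjacent to every vertex of G). Then the eccentricity matrix ε(G + u) has at least two positive eigenvalues. -/

import Mathlib

open Finset Polynomial

noncomputable def ecc {V : Type*} [Fintype V] (G : SimpleGraph V) (u : V) : ℕ :=
  Finset.univ.sup (G.dist u)

noncomputable def eccMatrix {V : Type*} [Fintype V] (G : SimpleGraph V) :
    Matrix V V ℝ := fun u v =>
  if G.dist u v = min (ecc G u) (ecc G v) then (G.dist u v : ℝ) else 0

theorem eccMatrix_isHermitian {V : Type*} [Fintype V] (G : SimpleGraph V) :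
    (eccMatrix G).IsHermitian := by
  unfold Matrix.IsHermitian
  ext u v
  simp only [Matrix.conjTranspose_apply, eccMatrix, star_trivial]
  rw [SimpleGraph.dist_comm, min_comm]

/-- Number of positive eigenvalues (with multiplicity) of a real symmetric matrix. -/
noncomputable def posEigCount {V : Type*} [Fintype V] [DecidableEq V]
    {A : Matrix V V ℝ} (hA : A.IsHermitian) : ℕ :=
  (Finset.univ.filter fun i => 0 < hA.eigenvalues i).card

/-- The join of two simple graphs: disjoint union plus all edges in between. -/
def graphJoin {α β : Type*} (G : SimpleGraph α) (H : SimpleGraph β) :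
    SimpleGraph (α ⊕ β) where
  Adj x y := match x, y with
    | Sum.inl a, Sum.inl b => G.Adj a b
    | Sum.inr a, Sum.inr b => H.Adj a b
    | _, _ => True
  symm := ⟨by rintro (a|a) (b|b) h <;> first | exact G.adj_symm h | exact H.adj_symm h | trivial⟩
  loopless := ⟨by rintro (a|a) h <;> first | exact G.loopless.irrefl _ h | exact H.loopless.irrefl _ h⟩

/-- The disjoint union of two simple graphs. -/
def graphSum {α β : Type*} (G : SimpleGraph α) (H : SimpleGraph β) :
    SimpleGraph (α ⊕ β) where
  Adj x y := match x, y with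
    | Sum.inl a, Sum.inl b => G.Adj a b
    | Sum.inr a, Sum.inr b => H.Adj a b
    | _, _ => False
  symm := ⟨by rintro (a|a) (b|b) h <;> first | exact G.adj_symm h | exact H.adj_symm h | trivial⟩
  loopless := ⟨by rintro (a|a) h <;> first | exact G.loopless.irrefl _ h | exact H.loopless.irrefl _ h⟩

/-- Disjoint union of blocks indexed by `ι`; block `i` has `r i` vertices and is a
clique when `P i` holds and a coclique (independent set) otherwise. -/
def blocksGraph {ι : Type*} (r : ι → ℕ) (P : ι → Prop) :
    SimpleGraph (Σ i, Fin (r i)) where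
  Adj x y := x ≠ y ∧ x.1 = y.1 ∧ P x.1
  symm := ⟨by rintro x y ⟨h1, h2, h3⟩; exact ⟨h1.symm, h2.symm, h2 ▸ h3⟩⟩
  loopless := ⟨fun x h => h.1 rfl⟩

/-!
Every vertex of `G` has eccentricity `2` in `G`, hence also in `G + u`, so on the `G`-block the
eccentricity matrix `M` of `G + u` is twice the adjacency matrix of the complement of `G`. Take
`v, w` at distance `2` with a common neighbour `m`, and `d` at distance `2` from `m`. For
`x = e_v + e_w` and `y = e_m + e_d / 2` one gets `xᵀMx = 4`, `yᵀMy = 2` and `0 ≤ xᵀMy ≤ 2`, so `M`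
is positive definite on the plane spanned by `x, y`. A symmetric matrix with at most one positive
eigenvalue satisfies the reverse Cauchy–Schwarz inequality `xᵀMx · yᵀMy ≤ (xᵀMy)²` whenever
`xᵀMx > 0`, so `M` has at least two positive eigenvalues.
-/

open Matrix SimpleGraph

lemma mul_sum_le_sq_sum_of_nonpos_of_ne {n : Type*} [Fintype n] {lam p q : n → ℝ} {i₀ : n}
    (hlam : ∀ j ≠ i₀, lam j ≤ 0) (hp : 0 < ∑ i, lam i * p i * p i) :
    (∑ i, lam i * p i * p i) * (∑ i, lam i * q i * q i) ≤ (∑ i, lam i * p i * q i) ^ 2 := by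
  set X := ∑ i, lam i * p i * p i
  set Y := ∑ i, lam i * q i * q i
  set W := ∑ i, lam i * p i * q i
  have hnonpos : ∀ r : n → ℝ, r i₀ = 0 → ∑ i, lam i * r i * r i ≤ 0 := by
    refine fun r hr => Finset.sum_nonpos fun i _ => ?_
    rcases eq_or_ne i i₀ with rfl | hi
    · simp [hr]
    · nlinarith [hlam i hi, mul_self_nonneg (r i)]
  have hβ : p i₀ ≠ 0 := fun h => (hnonpos p h).not_gt hp
  -- `q i₀ • p - p i₀ • q` vanishes at `i₀`, so the form is nonpositive on it.
  have hplane : q i₀ ^ 2 * X - 2 * q i₀ * p i₀ * W + p i₀ ^ 2 * Y ≤ 0 := by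
    have hexpand : ∑ i, lam i * (q i₀ * p i - p i₀ * q i) * (q i₀ * p i - p i₀ * q i) =
        q i₀ ^ 2 * X - 2 * q i₀ * p i₀ * W + p i₀ ^ 2 * Y := by
      simp only [X, Y, W, Finset.mul_sum, ← Finset.sum_sub_distrib, ← Finset.sum_add_distrib]
      exact Finset.sum_congr rfl fun i _ => by ring
    exact hexpand ▸ hnonpos _ (by ring)
  -- `X * (lhs of hplane) = (q i₀ * X - p i₀ * W) ^ 2 + p i₀ ^ 2 * (X * Y - W ^ 2)`
  nlinarith [sq_nonneg (q i₀ * X - p i₀ * W), pow_pos (sq_pos_of_ne_zero hβ) 1,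
    mul_nonpos_of_nonneg_of_nonpos hp.le hplane]

section Eigenvalues

variable {n : Type*} [Fintype n] [DecidableEq n]

lemma Matrix.single_add_single_dotProduct_mulVec {R : Type*} [CommRing R] (M : Matrix n n R)
    (a b c e : n) (s t s' t' : R) :
    (Pi.single a s + Pi.single b t) ⬝ᵥ M *ᵥ (Pi.single c s' + Pi.single e t') =
      s * M a c * s' + s * M a e * t' + t * M b c * s' + t * M b e * t' := by
  simp only [mulVec_add, dotProduct_add, add_dotProduct, single_dotProduct, mulVec_single,
    Pi.smul_apply, col_apply, MulOpposite.smul_eq_mul_unop, MulOpposite.unop_op]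
  ring

lemma Matrix.IsHermitian.dotProduct_mulVec_eq_sum_eigenvalues {A : Matrix n n ℝ}
    (hA : A.IsHermitian) (x y : n → ℝ) :
    x ⬝ᵥ A *ᵥ y = ∑ i, hA.eigenvalues i *
      (star (hA.eigenvectorUnitary : Matrix n n ℝ) *ᵥ x) i *
      (star (hA.eigenvectorUnitary : Matrix n n ℝ) *ᵥ y) i := by
  set U := (hA.eigenvectorUnitary : Matrix n n ℝ)
  have hAy : A *ᵥ y = U *ᵥ (diagonal (RCLike.ofReal ∘ hA.eigenvalues) *ᵥ (star U *ᵥ y)) := by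
    rw [mulVec_mulVec, mulVec_mulVec]
    conv_lhs => rw [hA.spectral_theorem, Unitary.conjStarAlgAut_apply]
  have hxU : x ᵥ* U = star U *ᵥ x := by
    funext i
    simp [vecMul, mulVec, dotProduct, mul_comm]
  rw [hAy, dotProduct_mulVec, hxU]
  simp only [dotProduct, mulVec_diagonal, Function.comp_apply, RCLike.ofReal_real_eq_id, id_eq]
  exact Finset.sum_congr rfl fun i _ => by ring

lemma Matrix.IsHermitian.exists_eigenvalues_nonpos_of_posEigCount_le_one [Nonempty n]
    {A : Matrix n n ℝ} (hA : A.IsHermitian) (h : posEigCount hA ≤ 1) :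
    ∃ i₀, ∀ j ≠ i₀, hA.eigenvalues j ≤ 0 := by
  obtain ⟨i₀, hsub⟩ := Finset.card_le_one_iff_subset_singleton.1 h
  refine ⟨i₀, fun j hj => not_lt.1 fun hpos => hj ?_⟩
  simpa using hsub (Finset.mem_filter.2 ⟨Finset.mem_univ j, hpos⟩)

lemma Matrix.IsHermitian.two_le_posEigCount {A : Matrix n n ℝ} (hA : A.IsHermitian)
    {x y : n → ℝ} (hx : 0 < x ⬝ᵥ A *ᵥ x)
    (hxy : (x ⬝ᵥ A *ᵥ y) ^ 2 < (x ⬝ᵥ A *ᵥ x) * (y ⬝ᵥ A *ᵥ y)) :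
    2 ≤ posEigCount hA := by
  by_contra! h
  have : Nonempty n := by
    by_contra! hn
    simp [dotProduct] at hx
  obtain ⟨i₀, hi₀⟩ := hA.exists_eigenvalues_nonpos_of_posEigCount_le_one (by omega)
  simp only [hA.dotProduct_mulVec_eq_sum_eigenvalues] at hx hxy
  exact hxy.not_ge (mul_sum_le_sq_sum_of_nonpos_of_ne hi₀ hx)

end Eigenvalues

section Graphs

variable {α β : Type*} {G : SimpleGraph α}

lemma SimpleGraph.dist_eq_two_iff {u v : α} :
    G.dist u v = 2 ↔ u ≠ v ∧ ¬ G.Adj u v ∧ (G.commonNeighbors u v).Nonempty := by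
  rw [dist, ENat.toNat_eq_iff two_ne_zero]
  exact edist_eq_two_iff

lemma exists_dist_eq_ecc [Fintype α] (G : SimpleGraph α) (u : α) :
    ∃ v, G.dist u v = ecc G u := by
  obtain ⟨v, -, hv⟩ := Finset.exists_mem_eq_sup Finset.univ ⟨u, Finset.mem_univ u⟩ (G.dist u)
  exact ⟨v, hv.symm⟩

lemma exists_ne_not_adj_of_two_le_ecc [Fintype α] {u : α} (h : 2 ≤ ecc G u) :
    ∃ v, v ≠ u ∧ ¬ G.Adj u v := by
  obtain ⟨v, hv⟩ := exists_dist_eq_ecc G u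
  refine ⟨v, fun huv => ?_, fun hadj => ?_⟩
  · rw [huv, dist_self] at hv
    omega
  · rw [dist_eq_one_iff_adj.2 hadj] at hv
    omega

lemma graphJoin_dist_inl_inl_le_two [Nonempty β] (K : SimpleGraph β) (a b : α) :
    (graphJoin G K).dist (.inl a) (.inl b) ≤ 2 := by
  let c : α ⊕ β := .inr (Classical.arbitrary β)
  exact dist_le (.cons (show (graphJoin G K).Adj (.inl a) c from trivial)
    (.cons (show (graphJoin G K).Adj c (.inl b) from trivial) .nil))

lemma graphJoin_dist_inl_inl_of_ne_of_not_adj [Nonempty β] (K : SimpleGraph β) {a b : α}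
    (hab : a ≠ b) (h : ¬ G.Adj a b) :
    (graphJoin G K).dist (.inl a) (.inl b) = 2 :=
  dist_eq_two_iff.2
    ⟨by simpa using hab, h, ⟨(.inr (Classical.arbitrary β) : α ⊕ β), trivial, trivial⟩⟩

lemma ecc_graphJoin_inl [Fintype α] [Fintype β] [Nonempty β] (K : SimpleGraph β) {a b : α}
    (hab : b ≠ a) (h : ¬ G.Adj a b) :
    ecc (graphJoin G K) (.inl a) = 2 := by
  refine le_antisymm (Finset.sup_le fun z _ => ?_) ?_
  · rcases z with c | c
    · exact graphJoin_dist_inl_inl_le_two K a c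
    · rw [dist_eq_one_iff_adj.2 trivial]
      omega
  · rw [← graphJoin_dist_inl_inl_of_ne_of_not_adj K hab.symm h]
    exact Finset.le_sup (Finset.mem_univ _)

open Classical in
lemma eccMatrix_graphJoin_inl_inl [Fintype α] [Fintype β] [Nonempty β] (K : SimpleGraph β)
    (hG : ∀ a, ∃ b, b ≠ a ∧ ¬ G.Adj a b) (a b : α) :
    eccMatrix (graphJoin G K) (.inl a) (.inl b) = if a ≠ b ∧ ¬ G.Adj a b then 2 else 0 := by
  obtain ⟨a', ha'⟩ := hG a
  obtain ⟨b', hb'⟩ := hG b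
  rw [eccMatrix, ecc_graphJoin_inl K ha'.1 ha'.2, ecc_graphJoin_inl K hb'.1 hb'.2, min_self]
  by_cases hab : a ≠ b ∧ ¬ G.Adj a b
  · rw [graphJoin_dist_inl_inl_of_ne_of_not_adj K hab.1 hab.2]
    simp [if_pos hab]
  · rw [if_neg hab, if_neg]
    intro h2
    obtain ⟨hne, hnadj, -⟩ := dist_eq_two_iff.1 h2
    exact hab ⟨by simpa using hne, hnadj⟩

end Graphs

theorem stmt4_general {V : Type*} [Fintype V] [DecidableEq V] (G : SimpleGraph V)
    (hdiam : Finset.univ.sup (ecc G) = 2)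
    (hrad : sInf (Set.range (ecc G)) = 2) :
    2 ≤ posEigCount (eccMatrix_isHermitian (graphJoin G (⊤ : SimpleGraph Unit))) := by
  have : Nonempty V := by
    by_contra! hV
    simp at hdiam
  obtain ⟨v, -, hv⟩ := Finset.exists_mem_eq_sup Finset.univ Finset.univ_nonempty (ecc G)
  obtain ⟨w, hw⟩ := exists_dist_eq_ecc G v
  obtain ⟨hvw, hnvw, m, hm⟩ := dist_eq_two_iff.1 (hw.trans (hv.symm.trans hdiam))
  obtain ⟨hvm, hwm⟩ := G.mem_commonNeighbors.1 hm
  have hfar (a : V) : ∃ b, b ≠ a ∧ ¬ G.Adj a b :=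
    exists_ne_not_adj_of_two_le_ecc (hrad ▸ Nat.sInf_le ⟨a, rfl⟩)
  obtain ⟨d, hdm, hmd⟩ := hfar m
  have hM := eccMatrix_graphJoin_inl_inl (⊤ : SimpleGraph Unit) hfar
  have hwv : ¬ G.Adj w v := fun h => hnvw h.symm
  refine (eccMatrix_isHermitian _).two_le_posEigCount
    (x := Pi.single (.inl v) 1 + Pi.single (.inl w) 1)
    (y := Pi.single (.inl m) 1 + Pi.single (.inl d) (1 / 2)) ?_ ?_ <;>
    simp only [single_add_single_dotProduct_mulVec, hM]
  · simp [hvw, hvw.symm, hnvw, hwv]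
  · simp [hvw, hvw.symm, hnvw, hwv, hdm, hdm.symm, hmd, G.adj_comm d m, hvm, hwm]
    -- only the entries at `(v, d)` and `(w, d)` are left undetermined
    split_ifs <;> norm_num

/-- if `G` is connected with radius = diameter = 2, then the join of `G`
with one new vertex has at least two positive eccentricity eigenvalues. -/
theorem stmt4 {V : Type*} [Fintype V] [DecidableEq V] (G : SimpleGraph V)
    (hconn : G.Connected) (hdiam : Finset.univ.sup (ecc G) = 2)
    (hrad : sInf (Set.range (ecc G)) = 2) :
    2 ≤ posEigCount (eccMatrix_isHermitian (graphJoin G (⊤ : SimpleGraph Unit))) :=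
  stmt4_general G hdiam hrad
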